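/- arXiv:1803.01430 — 8 statements merged into one kernel-verified Lean document; each statement's English description precedes it below -/
import Mathlib

section
/- For every n and all α, ρ ∈ ℝ^n, if the single-vertex consistency constraint T_n(α, ρ) = I₃ holds, then T_n(α, −ρ) = I₃ also holds; i.e., the solution set of the single-vertex consistency constraint is symmetric about the origin in the folding angles. -/
open Matrix Real

/-- The rotation matrix about the z-axis. -/
noncomputable def Rz (θ : ℝ) : Matrix (Fin 3) (Fin 3) ℝ :=
  !![Real.cos θ, -Real.sin θ, 0; Real.sin θ, Real.cos θ, 0; 0, 0, 1]

/-- The rotation matrix about the x-axis. -/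
noncomputable def Rx (θ : ℝ) : Matrix (Fin 3) (Fin 3) ℝ :=
  !![1, 0, 0; 0, Real.cos θ, -Real.sin θ; 0, Real.sin θ, Real.cos θ]

/-- The single-vertex consistency matrix `T_n(α, ρ) = ∏_{j=1}^n R_z(α_j)·R_x(ρ_j)`,
the product taken in order of increasing `j`. -/
noncomputable def Tv (n : ℕ) (α ρ : Fin n → ℝ) : Matrix (Fin 3) (Fin 3) ℝ :=
  (List.ofFn (fun j : Fin n => Rz (α j) * Rx (ρ j))).prod

/-- Reflection `diag(1,1,-1)`. -/
def Jm : Matrix (Fin 3) (Fin 3) ℝ := !![1, 0, 0; 0, 1, 0; 0, 0, -1]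

lemma Jm_mul_Jm : Jm * Jm = 1 := by
  simp [Jm, Matrix.mul_fin_three, Matrix.one_fin_three]

lemma Rz_mul_Jm (θ : ℝ) : Rz θ * Jm = Jm * Rz θ := by
  simp [Jm, Rz, Matrix.mul_fin_three]

lemma Rx_neg_mul_Jm (θ : ℝ) : Rx (-θ) * Jm = Jm * Rx θ := by
  simp [Jm, Rx, Matrix.mul_fin_three, Real.cos_neg, Real.sin_neg]

lemma Tv_neg (n : ℕ) (α ρ : Fin n → ℝ) :
    Tv n α (fun j => -(ρ j)) * Jm = Jm * Tv n α ρ := by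
  induction n with
  | zero => simp [Tv]
  | succ m ih =>
    have h1 : Tv (m+1) α ρ =
        Rz (α 0) * Rx (ρ 0) * Tv m (fun j => α j.succ) (fun j => ρ j.succ) := by
      simp [Tv, List.ofFn_succ, mul_assoc]
    have h2 : Tv (m+1) α (fun j => -(ρ j)) =
        Rz (α 0) * Rx (-(ρ 0)) * Tv m (fun j => α j.succ) (fun j => -(ρ j.succ)) := by
      simp [Tv, List.ofFn_succ, mul_assoc]
    rw [h1, h2, mul_assoc, ih (fun j => α j.succ) (fun j => ρ j.succ)]
    rw [show Rz (α 0) * Rx (-ρ 0) * (Jm * Tv m (fun j => α j.succ) (fun j => ρ j.succ))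
        = Rz (α 0) * (Rx (-ρ 0) * Jm) * Tv m (fun j => α j.succ) (fun j => ρ j.succ) by
      simp [mul_assoc]]
    rw [Rx_neg_mul_Jm, ← mul_assoc, Rz_mul_Jm]
    simp [mul_assoc]

/-- if `T_n(α, ρ) = I₃` then `T_n(α, −ρ) = I₃`: the solution set of the
single-vertex consistency constraint is symmetric about the origin in the folding angles. -/
theorem single_vertex_solution_symmetric (n : ℕ) (α ρ : Fin n → ℝ)
    (h : Tv n α ρ = 1) : Tv n α (fun j => -(ρ j)) = 1 := by
  have := Tv_neg n α ρ
  rw [h, mul_one] at this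
  calc Tv n α (fun j => -(ρ j))
      = Tv n α (fun j => -(ρ j)) * (Jm * Jm) := by rw [Jm_mul_Jm, mul_one]
    _ = (Tv n α (fun j => -(ρ j)) * Jm) * Jm := by rw [mul_assoc]
    _ = Jm * Jm := by rw [this]
    _ = 1 := Jm_mul_Jm
end

section
/- For every K, all β, a, b ∈ ℝ^K and all ρ ∈ ℝ^K, the single-hole consistency matrix satisfies T_K(β, a, b, −ρ) = D₄ · T_K(β, a, b, ρ) · D₄ where D₄ = diag(1, 1, −1, 1); consequently, if T_K(β, a, b, ρ) = I₄ then T_K(β, a, b, −ρ) = I₄, i.e., the solution set of the single-hole consistency constraint is symmetric about the origin in the folding angles. -/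
open Matrix Real

/-- The homogeneous matrix `H(β, a, b)`: rotation `R_z(β)` with translation `(a, b, 0)`. -/
noncomputable def Hmat (β a b : ℝ) : Matrix (Fin 4) (Fin 4) ℝ :=
  !![Real.cos β, -Real.sin β, 0, a;
     Real.sin β,  Real.cos β, 0, b;
     0, 0, 1, 0;
     0, 0, 0, 1]

/-- The homogeneous matrix `X(ρ)`: rotation `R_x(ρ)` with zero translation. -/
noncomputable def Xmat (ρ : ℝ) : Matrix (Fin 4) (Fin 4) ℝ :=
  !![1, 0, 0, 0;
     0, Real.cos ρ, -Real.sin ρ, 0;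
     0, Real.sin ρ,  Real.cos ρ, 0;
     0, 0, 0, 1]

/-- The single-hole consistency matrix `T_K(β, a, b, ρ) = ∏_{k=1}^K H(β_k, a_k, b_k)·X(ρ_k)`,
the product taken in order of increasing `k`. -/
noncomputable def Th (K : ℕ) (β a b ρ : Fin K → ℝ) : Matrix (Fin 4) (Fin 4) ℝ :=
  (List.ofFn (fun k : Fin K => Hmat (β k) (a k) (b k) * Xmat (ρ k))).prod

/-- The matrix `D₄ = diag(1, 1, −1, 1)`. -/
noncomputable def D4 : Matrix (Fin 4) (Fin 4) ℝ :=
  !![1, 0, 0, 0; 0, 1, 0, 0; 0, 0, -1, 0; 0, 0, 0, 1]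

lemma mul_fin_four (a₁₁ a₁₂ a₁₃ a₁₄ a₂₁ a₂₂ a₂₃ a₂₄ a₃₁ a₃₂ a₃₃ a₃₄ a₄₁ a₄₂ a₄₃ a₄₄
    b₁₁ b₁₂ b₁₃ b₁₄ b₂₁ b₂₂ b₂₃ b₂₄ b₃₁ b₃₂ b₃₃ b₃₄ b₄₁ b₄₂ b₄₃ b₄₄ : ℝ) :
    !![a₁₁, a₁₂, a₁₃, a₁₄; a₂₁, a₂₂, a₂₃, a₂₄; a₃₁, a₃₂, a₃₃, a₃₄; a₄₁, a₄₂, a₄₃, a₄₄] *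
    !![b₁₁, b₁₂, b₁₃, b₁₄; b₂₁, b₂₂, b₂₃, b₂₄; b₃₁, b₃₂, b₃₃, b₃₄; b₄₁, b₄₂, b₄₃, b₄₄] =
    !![a₁₁*b₁₁ + a₁₂*b₂₁ + a₁₃*b₃₁ + a₁₄*b₄₁, a₁₁*b₁₂ + a₁₂*b₂₂ + a₁₃*b₃₂ + a₁₄*b₄₂,
       a₁₁*b₁₃ + a₁₂*b₂₃ + a₁₃*b₃₃ + a₁₄*b₄₃, a₁₁*b₁₄ + a₁₂*b₂₄ + a₁₃*b₃₄ + a₁₄*b₄₄;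
       a₂₁*b₁₁ + a₂₂*b₂₁ + a₂₃*b₃₁ + a₂₄*b₄₁, a₂₁*b₁₂ + a₂₂*b₂₂ + a₂₃*b₃₂ + a₂₄*b₄₂,
       a₂₁*b₁₃ + a₂₂*b₂₃ + a₂₃*b₃₃ + a₂₄*b₄₃, a₂₁*b₁₄ + a₂₂*b₂₄ + a₂₃*b₃₄ + a₂₄*b₄₄;
       a₃₁*b₁₁ + a₃₂*b₂₁ + a₃₃*b₃₁ + a₃₄*b₄₁, a₃₁*b₁₂ + a₃₂*b₂₂ + a₃₃*b₃₂ + a₃₄*b₄₂,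
       a₃₁*b₁₃ + a₃₂*b₂₃ + a₃₃*b₃₃ + a₃₄*b₄₃, a₃₁*b₁₄ + a₃₂*b₂₄ + a₃₃*b₃₄ + a₃₄*b₄₄;
       a₄₁*b₁₁ + a₄₂*b₂₁ + a₄₃*b₃₁ + a₄₄*b₄₁, a₄₁*b₁₂ + a₄₂*b₂₂ + a₄₃*b₃₂ + a₄₄*b₄₂,
       a₄₁*b₁₃ + a₄₂*b₂₃ + a₄₃*b₃₃ + a₄₄*b₄₃, a₄₁*b₁₄ + a₄₂*b₂₄ + a₄₃*b₃₄ + a₄₄*b₄₄] := by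
  ext i j
  fin_cases i <;> fin_cases j <;>
    simp [Matrix.mul_apply, Fin.sum_univ_four]

lemma one_fin_four : (1 : Matrix (Fin 4) (Fin 4) ℝ) =
    !![1, 0, 0, 0; 0, 1, 0, 0; 0, 0, 1, 0; 0, 0, 0, 1] := by
  ext i j
  fin_cases i <;> fin_cases j <;> simp [Matrix.one_apply, Matrix.vecHead, Matrix.vecTail]

lemma D4_sq : D4 * D4 = 1 := by
  rw [D4, mul_fin_four, one_fin_four]; norm_num

lemma conj_lemma (β a b ρ : ℝ) :
    Hmat β a b * Xmat (-ρ) = D4 * (Hmat β a b * Xmat ρ) * D4 := by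
  rw [Hmat, Xmat, Xmat, D4, mul_fin_four, mul_fin_four, mul_fin_four, mul_fin_four,
    Real.cos_neg, Real.sin_neg]
  norm_num

lemma Th_neg (K : ℕ) (β a b ρ : Fin K → ℝ) :
    Th K β a b (fun k => -(ρ k)) = D4 * Th K β a b ρ * D4 := by
  induction K with
  | zero => simp [Th, D4_sq]
  | succ n ih =>
    simp only [Th, List.ofFn_succ, List.prod_cons] at *
    rw [ih (fun i => β i.succ) (fun i => a i.succ) (fun i => b i.succ) (fun i => ρ i.succ),
      conj_lemma]
    have : D4 * (Hmat (β 0) (a 0) (b 0) * Xmat (ρ 0)) * D4 *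
        (D4 * (List.ofFn fun i : Fin n =>
          Hmat (β i.succ) (a i.succ) (b i.succ) * Xmat (ρ i.succ)).prod * D4) =
        D4 * ((Hmat (β 0) (a 0) (b 0) * Xmat (ρ 0)) * (D4 * D4) *
          (List.ofFn fun i : Fin n =>
            Hmat (β i.succ) (a i.succ) (b i.succ) * Xmat (ρ i.succ)).prod) * D4 := by
      simp only [mul_assoc]
    rw [this, D4_sq, mul_one]

/-- `T_K(β, a, b, −ρ) = D₄ · T_K(β, a, b, ρ) · D₄`; consequently the solution
set of the single-hole consistency constraint is symmetric about the origin. -/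
theorem single_hole_consistency_neg (K : ℕ) (β a b ρ : Fin K → ℝ) :
    Th K β a b (fun k => -(ρ k)) = D4 * Th K β a b ρ * D4 ∧
    (Th K β a b ρ = 1 → Th K β a b (fun k => -(ρ k)) = 1) := by
  refine ⟨Th_neg K β a b ρ, fun h => ?_⟩
  rw [Th_neg, h, mul_one, D4_sq]
end

section
/- Let α₁, α₂ ∈ (0, 2π) and ρ₁, ρ₂ ∈ [−π, π]. Then R_z(α₁)·R_x(ρ₁)·R_z(α₂)·R_x(ρ₂) = I₃ holds if and only if one of the following three cases holds: (a) α₁ = α₂ = π and ρ₁ = ρ₂; (b) α₁ + α₂ = 2π and ρ₁ = ρ₂ = 0; (c) α₁ = α₂ and ρ₁ ∈ {−π, π} and ρ₂ ∈ {−π, π}. (This classifies the configuration space of a degree-2 single-vertex creased paper.) -/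
open Matrix Real

private lemma sin_zero_Ioo {x : ℝ} (h1 : 0 < x) (h2 : x < 2 * π) (hs : Real.sin x = 0) :
    x = π := by
  obtain ⟨n, hn⟩ := Real.sin_eq_zero_iff.mp hs
  have hπ := Real.pi_pos
  have hn0 : (0 : ℝ) < (n : ℝ) := by nlinarith
  have hn2 : ((n : ℝ)) < 2 := by nlinarith
  have h0 : (0 : ℤ) < n := by exact_mod_cast hn0
  have h2' : n < 2 := by exact_mod_cast hn2
  have : n = 1 := by omega
  subst this
  simpa using hn.symm

private lemma sin_zero_Icc {x : ℝ} (h1 : -π ≤ x) (h2 : x ≤ π) (hs : Real.sin x = 0) :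
    x = -π ∨ x = 0 ∨ x = π := by
  obtain ⟨n, hn⟩ := Real.sin_eq_zero_iff.mp hs
  have hπ := Real.pi_pos
  have hn1 : (-1 : ℝ) ≤ (n : ℝ) := by nlinarith
  have hn2 : ((n : ℝ)) ≤ 1 := by nlinarith
  have h1' : (-1 : ℤ) ≤ n := by exact_mod_cast hn1
  have h2' : n ≤ 1 := by exact_mod_cast hn2
  interval_cases n
  · left; push_cast at hn; linarith
  · right; left; push_cast at hn; linarith
  · right; right; push_cast at hn; linarith

private lemma cos_one_n {x : ℝ} (hc : Real.cos x = 1) : ∃ n : ℤ, (n : ℝ) * (2 * π) = x :=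
  (Real.cos_eq_one_iff x).mp hc

set_option maxHeartbeats 1000000 in
/-- classification of the configuration space of a degree-2 single-vertex
creased paper. -/
theorem degree_two_single_vertex_classification
    (α₁ α₂ : ℝ) (hα₁ : α₁ ∈ Set.Ioo 0 (2 * π)) (hα₂ : α₂ ∈ Set.Ioo 0 (2 * π))
    (ρ₁ ρ₂ : ℝ) (hρ₁ : ρ₁ ∈ Set.Icc (-π) π) (hρ₂ : ρ₂ ∈ Set.Icc (-π) π) :
    Rz α₁ * Rx ρ₁ * Rz α₂ * Rx ρ₂ = 1 ↔
      ((α₁ = π ∧ α₂ = π ∧ ρ₁ = ρ₂) ∨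
       (α₁ + α₂ = 2 * π ∧ ρ₁ = 0 ∧ ρ₂ = 0) ∨
       (α₁ = α₂ ∧ (ρ₁ = -π ∨ ρ₁ = π) ∧ (ρ₂ = -π ∨ ρ₂ = π))) := by
  obtain ⟨ha1l, ha1r⟩ := hα₁
  obtain ⟨ha2l, ha2r⟩ := hα₂
  obtain ⟨hr1l, hr1r⟩ := hρ₁
  obtain ⟨hr2l, hr2r⟩ := hρ₂
  have hπ := Real.pi_pos
  constructor
  · intro h
    have hinv : Rz (-α₁) * Rz α₁ = 1 := by
      ext i j
      fin_cases i <;> fin_cases j <;>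
        simp [Rz, Matrix.mul_apply, Fin.sum_univ_three, Matrix.one_apply] <;>
        first
          | ring1
          | linear_combination sin_sq_add_cos_sq α₁
          | linear_combination -sin_sq_add_cos_sq α₁
    have h' : Rx ρ₁ * Rz α₂ * Rx ρ₂ = Rz (-α₁) := by
      have := congrArg (fun M => Rz (-α₁) * M) h
      simpa [← mul_assoc, hinv] using this
    have e := fun i j => Matrix.ext_iff.mpr h' i j
    have E00 := e 0 0
    have E01 := e 0 1
    have E02 := e 0 2
    have E10 := e 1 0
    have E20 := e 2 0
    have E21 := e 2 1
    have E22 := e 2 2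
    simp [Rx, Rz, Matrix.mul_apply, Fin.sum_univ_three, Matrix.vecHead, Matrix.vecTail]
      at E00 E01 E02 E10 E20 E21 E22
    by_cases hs2 : Real.sin α₂ = 0
    · -- α₂ = π, then α₁ = π
      have ha2 : α₂ = π := sin_zero_Ioo ha2l ha2r hs2
      have hc1 : Real.cos α₁ = -1 := by rw [← E00, ha2]; simp
      have hs1 : Real.sin α₁ = 0 := by
        have h2 : Real.sin α₁ ^ 2 = 0 := by
          have := sin_sq_add_cos_sq α₁; rw [hc1] at this; nlinarith
        exact sq_eq_zero_iff.mp h2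
      have ha1 : α₁ = π := sin_zero_Ioo ha1l ha1r hs1
      subst ha1; subst ha2
      simp [Real.cos_pi] at E21 E22
      have hcd : Real.cos (ρ₁ - ρ₂) = 1 := by
        rw [Real.cos_sub]; linarith
      obtain ⟨n, hn⟩ := cos_one_n hcd
      have hn1 : (-1 : ℝ) ≤ (n : ℝ) := by nlinarith
      have hn2 : ((n : ℝ)) ≤ 1 := by nlinarith
      have h1' : (-1 : ℤ) ≤ n := by exact_mod_cast hn1
      have h2' : n ≤ 1 := by exact_mod_cast hn2
      interval_cases n
      · -- ρ₁ - ρ₂ = -2π : ρ₁ = -π, ρ₂ = π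
        right; right
        push_cast at hn
        exact ⟨rfl, Or.inl (by linarith), Or.inr (by linarith)⟩
      · -- ρ₁ = ρ₂
        left
        push_cast at hn
        exact ⟨rfl, rfl, by linarith⟩
      · right; right
        push_cast at hn
        exact ⟨rfl, Or.inr (by linarith), Or.inl (by linarith)⟩
    · -- sin α₂ ≠ 0
      have hsρ2 : Real.sin ρ₂ = 0 := E02.resolve_left hs2
      have hsρ1 : Real.sin ρ₁ = 0 := E20.resolve_right hs2
      rcases sin_zero_Icc hr2l hr2r hsρ2 with h2c | h2c | h2c
      · -- ρ₂ = -π, cos ρ₂ = -1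
        have hcρ2 : Real.cos ρ₂ = -1 := by rw [h2c]; simp
        have hs12 : Real.sin α₂ = Real.sin α₁ := by
          rw [hcρ2] at E01; linarith
        have hcρ1 : Real.cos ρ₁ = -1 := by
          have h0 : (Real.cos ρ₁ + 1) * Real.sin α₂ = 0 := by linear_combination E10 + hs12
          rcases mul_eq_zero.mp h0 with h | h
          · linarith
          · exact absurd h hs2
        have hcd : Real.cos (α₁ - α₂) = 1 := by
          rw [Real.cos_sub]
          linear_combination (sin_sq_add_cos_sq α₂) - Real.cos α₂ * E00 - Real.sin α₂ * hs12
        obtain ⟨n, hn⟩ := cos_one_n hcd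
        have hn1 : (-1 : ℝ) < (n : ℝ) := by nlinarith
        have hn2 : ((n : ℝ)) < 1 := by nlinarith
        have h1' : (-1 : ℤ) < n := by exact_mod_cast hn1
        have h2' : n < 1 := by exact_mod_cast hn2
        have hn0 : n = 0 := by omega
        subst hn0
        push_cast at hn
        refine Or.inr (Or.inr ⟨by linarith, ?_, Or.inl h2c⟩)
        rcases sin_zero_Icc hr1l hr1r hsρ1 with h | h | h
        · exact Or.inl h
        · exfalso; rw [h] at hcρ1; simp at hcρ1; linarith
        · exact Or.inr h
      · -- ρ₂ = 0
        have hcρ2 : Real.cos ρ₂ = 1 := by rw [h2c]; simp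
        have hs12 : Real.sin α₂ = -Real.sin α₁ := by
          rw [hcρ2] at E01; linarith
        have hcρ1 : Real.cos ρ₁ = 1 := by
          have h0 : (Real.cos ρ₁ - 1) * Real.sin α₂ = 0 := by linear_combination E10 - hs12
          rcases mul_eq_zero.mp h0 with h | h
          · linarith
          · exact absurd h hs2
        have hρ10 : ρ₁ = 0 := by
          rcases sin_zero_Icc hr1l hr1r hsρ1 with h | h | h
          · exfalso; rw [h] at hcρ1; simp at hcρ1; linarith
          · exact h
          · exfalso; rw [h] at hcρ1; simp at hcρ1; linarith
        have hcs : Real.cos (α₁ + α₂) = 1 := by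
          rw [Real.cos_add]
          linear_combination (sin_sq_add_cos_sq α₂) - Real.cos α₂ * E00 - Real.sin α₂ * hs12
        obtain ⟨n, hn⟩ := cos_one_n hcs
        have hn1 : (0 : ℝ) < (n : ℝ) := by nlinarith
        have hn2 : ((n : ℝ)) < 2 := by nlinarith
        have h1' : (0 : ℤ) < n := by exact_mod_cast hn1
        have h2' : n < 2 := by exact_mod_cast hn2
        have hn0 : n = 1 := by omega
        subst hn0
        push_cast at hn
        exact Or.inr (Or.inl ⟨by linarith, hρ10, h2c⟩)
      · -- ρ₂ = π
        have hcρ2 : Real.cos ρ₂ = -1 := by rw [h2c]; simp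
        have hs12 : Real.sin α₂ = Real.sin α₁ := by
          rw [hcρ2] at E01; linarith
        have hcρ1 : Real.cos ρ₁ = -1 := by
          have h0 : (Real.cos ρ₁ + 1) * Real.sin α₂ = 0 := by linear_combination E10 + hs12
          rcases mul_eq_zero.mp h0 with h | h
          · linarith
          · exact absurd h hs2
        have hcd : Real.cos (α₁ - α₂) = 1 := by
          rw [Real.cos_sub]
          linear_combination (sin_sq_add_cos_sq α₂) - Real.cos α₂ * E00 - Real.sin α₂ * hs12
        obtain ⟨n, hn⟩ := cos_one_n hcd
        have hn1 : (-1 : ℝ) < (n : ℝ) := by nlinarith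
        have hn2 : ((n : ℝ)) < 1 := by nlinarith
        have h1' : (-1 : ℤ) < n := by exact_mod_cast hn1
        have h2' : n < 1 := by exact_mod_cast hn2
        have hn0 : n = 0 := by omega
        subst hn0
        push_cast at hn
        refine Or.inr (Or.inr ⟨by linarith, ?_, Or.inr h2c⟩)
        rcases sin_zero_Icc hr1l hr1r hsρ1 with h | h | h
        · exact Or.inl h
        · exfalso; rw [h] at hcρ1; simp at hcρ1; linarith
        · exact Or.inr h
  · rintro (⟨ha1, ha2, hr⟩ | ⟨ha, hr1, hr2⟩ | ⟨ha, hr1, hr2⟩)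
    · subst ha1; subst ha2; subst hr
      ext i j
      fin_cases i <;> fin_cases j <;>
        simp [Rz, Rx, Matrix.mul_apply, Fin.sum_univ_three, Matrix.one_apply,
          Matrix.vecHead, Matrix.vecTail] <;>
        first
          | ring1
          | linear_combination sin_sq_add_cos_sq ρ₁
          | linear_combination sin_sq_add_cos_sq ρ₂
          | linear_combination -sin_sq_add_cos_sq ρ₁
          | linear_combination -sin_sq_add_cos_sq ρ₂
    · subst hr1; subst hr2
      have hc : Real.cos α₁ = Real.cos α₂ := by
        have hh : α₁ = 2 * π - α₂ := by linarith
        rw [hh, Real.cos_sub]; simp [Real.cos_two_pi, Real.sin_two_pi]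
      have hs : Real.sin α₁ = -Real.sin α₂ := by
        have hh : α₁ = 2 * π - α₂ := by linarith
        rw [hh, Real.sin_sub]; simp [Real.cos_two_pi, Real.sin_two_pi]
      ext i j
      fin_cases i <;> fin_cases j <;>
        simp [Rz, Rx, Matrix.mul_apply, Fin.sum_univ_three, Matrix.one_apply,
          Matrix.vecHead, Matrix.vecTail] <;>
        (try rw [hc, hs]) <;>
        first
          | ring1
          | linear_combination sin_sq_add_cos_sq α₂
          | linear_combination -sin_sq_add_cos_sq α₂
          | linear_combination hc
          | linear_combination hs
          | linear_combination Real.cos α₂ * hc - Real.sin α₂ * hs + sin_sq_add_cos_sq α₂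
          | linear_combination Real.cos α₂ * hc + Real.sin α₂ * hs + sin_sq_add_cos_sq α₂
          | linear_combination Real.sin α₂ * hc + Real.cos α₂ * hs
          | linear_combination Real.sin α₂ * hc - Real.cos α₂ * hs
      ;
    · subst ha
      have hs1 : Real.sin ρ₁ = 0 := by rcases hr1 with h | h <;> rw [h] <;> simp
      have hc1 : Real.cos ρ₁ = -1 := by rcases hr1 with h | h <;> rw [h] <;> simp
      have hs2 : Real.sin ρ₂ = 0 := by rcases hr2 with h | h <;> rw [h] <;> simp
      have hc2 : Real.cos ρ₂ = -1 := by rcases hr2 with h | h <;> rw [h] <;> simp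
      ext i j
      fin_cases i <;> fin_cases j <;>
        simp [Rz, Rx, Matrix.mul_apply, Fin.sum_univ_three, Matrix.one_apply,
          Matrix.vecHead, Matrix.vecTail, hs1, hc1, hs2, hc2] <;>
        first
          | ring1
          | linear_combination sin_sq_add_cos_sq α₁
          | linear_combination sin_sq_add_cos_sq α₂
          | linear_combination -sin_sq_add_cos_sq α₁
          | linear_combination -sin_sq_add_cos_sq α₂
end

section
/- Let β₁, β₂ ∈ (0, 2π), a₁, b₁, a₂, b₂ ∈ ℝ and ρ₁, ρ₂ ∈ [−π, π]. Then H(β₁, a₁, b₁)·X(ρ₁)·H(β₂, a₂, b₂)·X(ρ₂) = I₄ holds if and only if one of the following three cases holds: (a) β₁ = β₂ = π, a₁ = a₂, b₁ = b₂ = 0, and ρ₁ = ρ₂; (b) β₁ + β₂ = 2π, ρ₁ = ρ₂ = 0, a₁ + a₂·cos β₁ − b₂·sin β₁ = 0 and b₁ + a₂·sin β₁ + b₂·cos β₁ = 0; (c) β₁ = β₂, ρ₁ ∈ {−π, π}, ρ₂ ∈ {−π, π}, a₁ + a₂·cos β₁ + b₂·sin β₁ = 0 and b₁ + a₂·sin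 β₁ − b₂·cos β₁ = 0. (This classifies the configuration space of a degree-2 single-hole creased paper.) -/
open Matrix Real

section Aux

lemma aux_sin_zero_cases {x : ℝ} (h1 : -π ≤ x) (h2 : x ≤ π) (h : Real.sin x = 0) :
    x = -π ∨ x = 0 ∨ x = π := by
  obtain ⟨n, hn⟩ := Real.sin_eq_zero_iff.1 h
  have hπ := Real.pi_pos
  have hn1 : (-1 : ℝ) ≤ (n : ℝ) := by nlinarith
  have hn2 : (n : ℝ) ≤ 1 := by nlinarith
  have hn1' : (-1 : ℤ) ≤ n := by exact_mod_cast hn1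
  have hn2' : n ≤ (1 : ℤ) := by exact_mod_cast hn2
  interval_cases n
  · left; push_cast at hn; linarith
  · right; left; push_cast at hn; linarith
  · right; right; push_cast at hn; linarith

lemma aux_cos_one_cases {x : ℝ} (h1 : -(2*π) ≤ x) (h2 : x ≤ 2*π) (h : Real.cos x = 1) :
    x = -(2*π) ∨ x = 0 ∨ x = 2*π := by
  obtain ⟨n, hn⟩ := (Real.cos_eq_one_iff _).1 h
  have hπ := Real.pi_pos
  have hn1 : (-1 : ℝ) ≤ (n : ℝ) := by nlinarith
  have hn2 : (n : ℝ) ≤ 1 := by nlinarith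
  have hn1' : (-1 : ℤ) ≤ n := by exact_mod_cast hn1
  have hn2' : n ≤ (1 : ℤ) := by exact_mod_cast hn2
  interval_cases n
  · left; push_cast at hn; linarith
  · right; left; push_cast at hn; linarith
  · right; right; push_cast at hn; linarith

lemma aux_cos_one_strict {x : ℝ} (h1 : -π ≤ x) (h2 : x ≤ π) (h : Real.cos x = 1) :
    x = 0 := by
  have hπ := Real.pi_pos
  rcases aux_cos_one_cases (by linarith) (by linarith) h with h' | h' | h' <;> linarith

lemma aux_cos_neg_one_cases {x : ℝ} (h1 : -π ≤ x) (h2 : x ≤ π) (h : Real.cos x = -1) :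
    x = -π ∨ x = π := by
  have hs : Real.sin x = 0 := by
    have h2' : Real.sin x ^ 2 = 0 := by nlinarith [Real.sin_sq_add_cos_sq x]
    exact pow_eq_zero_iff two_ne_zero |>.1 h2'
  rcases aux_sin_zero_cases h1 h2 hs with h' | h' | h'
  · exact Or.inl h'
  · exfalso; rw [h', Real.cos_zero] at h; linarith
  · exact Or.inr h'

lemma aux_beta_pi {x : ℝ} (h1 : 0 < x) (h2 : x < 2*π) (h : Real.sin x = 0) : x = π := by
  obtain ⟨n, hn⟩ := Real.sin_eq_zero_iff.1 h
  have hπ := Real.pi_pos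
  have hn1 : (0 : ℝ) < (n : ℝ) := by nlinarith
  have hn2 : (n : ℝ) < 2 := by nlinarith
  have hn1' : (0 : ℤ) < n := by exact_mod_cast hn1
  have hn2' : n < (2 : ℤ) := by exact_mod_cast hn2
  interval_cases n
  push_cast at hn; linarith

lemma aux_sum_two_pi {x : ℝ} (h1 : 0 < x) (h2 : x < 4*π) (h : Real.cos x = 1) :
    x = 2*π := by
  obtain ⟨n, hn⟩ := (Real.cos_eq_one_iff _).1 h
  have hπ := Real.pi_pos
  have hn1 : (0 : ℝ) < (n : ℝ) := by nlinarith
  have hn2 : (n : ℝ) < 2 := by nlinarith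
  have hn1' : (0 : ℤ) < n := by exact_mod_cast hn1
  have hn2' : n < (2 : ℤ) := by exact_mod_cast hn2
  interval_cases n
  push_cast at hn; linarith

lemma aux_diff_zero {x : ℝ} (h1 : -(2*π) < x) (h2 : x < 2*π) (h : Real.cos x = 1) :
    x = 0 := by
  rcases aux_cos_one_cases (by linarith) (by linarith) h with h' | h' | h' <;> linarith

end Aux

set_option maxHeartbeats 1000000 in
/-- The matrix equation is equivalent to a system of scalar equations. -/
lemma key_equations (β₁ β₂ a₁ b₁ a₂ b₂ ρ₁ ρ₂ : ℝ) :
    Hmat β₁ a₁ b₁ * Xmat ρ₁ * Hmat β₂ a₂ b₂ * Xmat ρ₂ = 1 ↔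
    (Real.cos β₁ * Real.cos β₂ - Real.sin β₁ * Real.sin β₂ * Real.cos ρ₁ = 1 ∧
     Real.sin β₁ * Real.sin ρ₁ * Real.sin ρ₂ -
       (Real.cos β₁ * Real.sin β₂ + Real.sin β₁ * Real.cos β₂ * Real.cos ρ₁) * Real.cos ρ₂ = 0 ∧
     Real.sin β₁ * Real.sin ρ₁ * Real.cos ρ₂ +
       (Real.cos β₁ * Real.sin β₂ + Real.sin β₁ * Real.cos β₂ * Real.cos ρ₁) * Real.sin ρ₂ = 0 ∧
     a₁ + a₂ * Real.cos β₁ - b₂ * Real.sin β₁ * Real.cos ρ₁ = 0 ∧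
     Real.sin β₁ * Real.cos β₂ + Real.cos β₁ * Real.sin β₂ * Real.cos ρ₁ = 0 ∧
     (Real.cos β₁ * Real.cos β₂ * Real.cos ρ₁ - Real.sin β₁ * Real.sin β₂) * Real.cos ρ₂ -
       Real.cos β₁ * Real.sin ρ₁ * Real.sin ρ₂ = 1 ∧
     (Real.cos β₁ * Real.cos β₂ * Real.cos ρ₁ - Real.sin β₁ * Real.sin β₂) * Real.sin ρ₂ +
       Real.cos β₁ * Real.sin ρ₁ * Real.cos ρ₂ = 0 ∧
     b₁ + a₂ * Real.sin β₁ + b₂ * Real.cos β₁ * Real.cos ρ₁ = 0 ∧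
     (Real.sin ρ₁ = 0 ∨ Real.sin β₂ = 0) ∧
     Real.sin ρ₁ * Real.cos β₂ * Real.cos ρ₂ + Real.cos ρ₁ * Real.sin ρ₂ = 0 ∧
     Real.cos ρ₁ * Real.cos ρ₂ - Real.sin ρ₁ * Real.cos β₂ * Real.sin ρ₂ = 1 ∧
     (Real.sin ρ₁ = 0 ∨ b₂ = 0)) := by
  constructor
  · intro h
    rw [← Matrix.ext_iff] at h
    have e1 := h 0 0; have e2 := h 0 1; have e3 := h 0 2; have e4 := h 0 3
    have e5 := h 1 0; have e6 := h 1 1; have e7 := h 1 2; have e8 := h 1 3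
    have e9 := h 2 0; have e10 := h 2 1; have e11 := h 2 2; have e12 := h 2 3
    simp [Hmat, Xmat, Matrix.mul_apply, Fin.sum_univ_four, Matrix.one_apply,
      Matrix.vecHead, Matrix.vecTail, Function.comp] at e1 e2 e3 e4 e5 e6 e7 e8 e9 e10 e11 e12
    refine ⟨by linear_combination e1, by linear_combination e2, by linear_combination e3,
      by linear_combination e4, by linear_combination e5, by linear_combination e6,
      by linear_combination -e7, by linear_combination e8, e9,
      by linear_combination e10, by linear_combination e11, e12⟩
  · rintro ⟨E1, E2, E3, E4, E5, E6, E7, E8, E9, E10, E11, E12⟩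
    ext i j
    fin_cases i <;> fin_cases j <;>
      simp [Hmat, Xmat, Matrix.mul_apply, Fin.sum_univ_four, Matrix.one_apply,
        Matrix.vecHead, Matrix.vecTail, Function.comp] <;>
      first
        | exact E9
        | exact E12
        | linear_combination E1
        | linear_combination E2
        | linear_combination E3
        | linear_combination E4
        | linear_combination E5
        | linear_combination E6
        | linear_combination -E7
        | linear_combination E8
        | linear_combination E10
        | linear_combination E11

set_option maxHeartbeats 1600000 in
/-- classification of the configuration space of a degree-2 single-hole
creased paper. -/
theorem degree_two_single_hole_classification
    (β₁ β₂ : ℝ) (hβ₁ : β₁ ∈ Set.Ioo 0 (2 * π)) (hβ₂ : β₂ ∈ Set.Ioo 0 (2 * π))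
    (a₁ b₁ a₂ b₂ : ℝ)
    (ρ₁ ρ₂ : ℝ) (hρ₁ : ρ₁ ∈ Set.Icc (-π) π) (hρ₂ : ρ₂ ∈ Set.Icc (-π) π) :
    Hmat β₁ a₁ b₁ * Xmat ρ₁ * Hmat β₂ a₂ b₂ * Xmat ρ₂ = 1 ↔
      ((β₁ = π ∧ β₂ = π ∧ a₁ = a₂ ∧ b₁ = 0 ∧ b₂ = 0 ∧ ρ₁ = ρ₂) ∨
       (β₁ + β₂ = 2 * π ∧ ρ₁ = 0 ∧ ρ₂ = 0 ∧
         a₁ + a₂ * Real.cos β₁ - b₂ * Real.sin β₁ = 0 ∧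
         b₁ + a₂ * Real.sin β₁ + b₂ * Real.cos β₁ = 0) ∨
       (β₁ = β₂ ∧ (ρ₁ = -π ∨ ρ₁ = π) ∧ (ρ₂ = -π ∨ ρ₂ = π) ∧
         a₁ + a₂ * Real.cos β₁ + b₂ * Real.sin β₁ = 0 ∧
         b₁ + a₂ * Real.sin β₁ - b₂ * Real.cos β₁ = 0)) := by
  obtain ⟨hb1l, hb1r⟩ := hβ₁
  obtain ⟨hb2l, hb2r⟩ := hβ₂
  obtain ⟨hr1l, hr1r⟩ := hρ₁
  obtain ⟨hr2l, hr2r⟩ := hρ₂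
  have hπ := Real.pi_pos
  rw [key_equations]
  constructor
  · rintro ⟨E1, E2, E3, E4, E5, E6, E7, E8, E9, E10, E11, E12⟩
    rcases E9 with hsr1 | hs2
    · -- sin ρ₁ = 0
      have hcr1 : Real.cos ρ₁ = 1 ∨ Real.cos ρ₁ = -1 := by
        have hp := Real.sin_sq_add_cos_sq ρ₁
        rcases mul_eq_zero.1 (show (Real.cos ρ₁ - 1) * (Real.cos ρ₁ + 1) = 0 by nlinarith)
          with h | h
        · left; linarith
        · right; linarith
      rcases hcr1 with hcr1 | hcr1
      · -- ρ₁ = 0, case (b)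
        have hρ10 : ρ₁ = 0 := aux_cos_one_strict hr1l hr1r hcr1
        have hcr2 : Real.cos ρ₂ = 1 := by
          rw [hsr1, hcr1] at E11; linear_combination E11
        have hρ20 : ρ₂ = 0 := aux_cos_one_strict hr2l hr2r hcr2
        have hsum : Real.cos (β₁ + β₂) = 1 := by
          rw [Real.cos_add]; rw [hcr1] at E1; linear_combination E1
        have hS : β₁ + β₂ = 2*π := aux_sum_two_pi (by linarith) (by linarith) hsum
        refine Or.inr (Or.inl ⟨hS, hρ10, hρ20, ?_, ?_⟩)
        · rw [hcr1] at E4; linear_combination E4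
        · rw [hcr1] at E8; linear_combination E8
      · -- cos ρ₁ = -1, case (c)
        have hρ1 := aux_cos_neg_one_cases hr1l hr1r hcr1
        have hcr2 : Real.cos ρ₂ = -1 := by
          rw [hsr1, hcr1] at E11; linear_combination -E11
        have hρ2 := aux_cos_neg_one_cases hr2l hr2r hcr2
        have hdiff : Real.cos (β₁ - β₂) = 1 := by
          rw [Real.cos_sub]; rw [hcr1] at E1; linear_combination E1
        have hbb : β₁ = β₂ := by
          have := aux_diff_zero (x := β₁ - β₂) (by linarith) (by linarith) hdiff
          linarith
        refine Or.inr (Or.inr ⟨hbb, hρ1, hρ2, ?_, ?_⟩)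
        · rw [hcr1] at E4; linear_combination E4
        · rw [hcr1] at E8; linear_combination E8
    · -- sin β₂ = 0
      have hb2pi : β₂ = π := aux_beta_pi hb2l hb2r hs2
      have hc2 : Real.cos β₂ = -1 := by rw [hb2pi]; exact Real.cos_pi
      have hc1 : Real.cos β₁ = -1 := by
        rw [hc2, hs2] at E1; linear_combination -E1
      have hs1 : Real.sin β₁ = 0 := by
        have hsq : Real.sin β₁ ^ 2 = 0 := by nlinarith [Real.sin_sq_add_cos_sq β₁]
        exact pow_eq_zero_iff two_ne_zero |>.1 hsq
      have hb1pi : β₁ = π := aux_beta_pi hb1l hb1r hs1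
      have ha : a₁ = a₂ := by rw [hc1, hs1] at E4; linear_combination E4
      have hb : b₁ = b₂ * Real.cos ρ₁ := by rw [hc1, hs1] at E8; linear_combination E8
      rw [hc2] at E10 E11
      have hcosd : Real.cos (ρ₁ - ρ₂) = 1 := by
        rw [Real.cos_sub]; linear_combination E11
      by_cases hb2 : b₂ = 0
      · have hb10 : b₁ = 0 := by rw [hb2] at hb; simpa using hb
        rcases aux_cos_one_cases (x := ρ₁ - ρ₂) (by linarith) (by linarith) hcosd
          with hd | hd | hd
        · -- ρ₁ = -π, ρ₂ = π
          have h1 : ρ₁ = -π := by linarith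
          have h2 : ρ₂ = π := by linarith
          refine Or.inr (Or.inr ⟨hb1pi.trans hb2pi.symm, Or.inl h1, Or.inr h2, ?_, ?_⟩)
          · rw [hc1, hs1, hb2]; linear_combination ha
          · rw [hs1, hb2]; linear_combination hb10
        · exact Or.inl ⟨hb1pi, hb2pi, ha, hb10, hb2, by linarith⟩
        · have h1 : ρ₁ = π := by linarith
          have h2 : ρ₂ = -π := by linarith
          refine Or.inr (Or.inr ⟨hb1pi.trans hb2pi.symm, Or.inr h1, Or.inl h2, ?_, ?_⟩)
          · rw [hc1, hs1, hb2]; linear_combination ha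
          · rw [hs1, hb2]; linear_combination hb10
      · -- b₂ ≠ 0
        have hsr1 : Real.sin ρ₁ = 0 := E12.resolve_right hb2
        have hsr2 : Real.sin ρ₂ = 0 := by
          have h0 : Real.cos ρ₁ * Real.sin ρ₂ = 0 := by
            rw [hsr1] at E10; linear_combination E10
          rcases mul_eq_zero.1 h0 with h | h
          · exfalso
            have := Real.sin_sq_add_cos_sq ρ₁
            rw [h, hsr1] at this; norm_num at this
          · exact h
        have hE11' : Real.cos ρ₁ * Real.cos ρ₂ = 1 := by
          rw [hsr1] at E11; linear_combination E11
        have hcr1 : Real.cos ρ₁ = 1 ∨ Real.cos ρ₁ = -1 := by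
          have hp := Real.sin_sq_add_cos_sq ρ₁
          rcases mul_eq_zero.1 (show (Real.cos ρ₁ - 1) * (Real.cos ρ₁ + 1) = 0 by nlinarith)
            with h | h
          · left; linarith
          · right; linarith
        rcases hcr1 with h | h
        · have hρ10 : ρ₁ = 0 := aux_cos_one_strict hr1l hr1r h
          have hcr2 : Real.cos ρ₂ = 1 := by rw [h] at hE11'; linarith
          have hρ20 : ρ₂ = 0 := aux_cos_one_strict hr2l hr2r hcr2
          refine Or.inr (Or.inl ⟨by rw [hb1pi, hb2pi]; ring, hρ10, hρ20, ?_, ?_⟩)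
          · rw [hc1, hs1]; linear_combination ha
          · rw [hc1, hs1]; linear_combination hb + b₂ * h
        · have hρ1 := aux_cos_neg_one_cases hr1l hr1r h
          have hcr2 : Real.cos ρ₂ = -1 := by rw [h] at hE11'; linarith
          have hρ2 := aux_cos_neg_one_cases hr2l hr2r hcr2
          refine Or.inr (Or.inr ⟨hb1pi.trans hb2pi.symm, hρ1, hρ2, ?_, ?_⟩)
          · rw [hc1, hs1]; linear_combination ha
          · rw [hc1, hs1]; linear_combination hb + b₂ * h
  · rintro (⟨h1, h2, h3, h4, h5, h6⟩ | ⟨hsum, h1, h2, h3, h4⟩ | ⟨hbb, h1, h2, h3, h4⟩)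
    · -- case (a)
      subst h1 h2 h3 h4 h5 h6
      have hp := Real.sin_sq_add_cos_sq ρ₁
      refine ⟨?_, ?_, ?_, ?_, ?_, ?_, ?_, ?_, Or.inr Real.sin_pi, ?_, ?_, Or.inr rfl⟩ <;>
        simp [Real.sin_pi, Real.cos_pi] <;> nlinarith [hp]
    · -- case (b)
      have hb2 : β₂ = 2*π - β₁ := by linarith
      subst hb2 h1 h2
      have hp := Real.sin_sq_add_cos_sq β₁
      have hc : Real.cos (2*π - β₁) = Real.cos β₁ := by
        rw [Real.cos_sub, Real.cos_two_pi, Real.sin_two_pi]; ring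
      have hs : Real.sin (2*π - β₁) = -Real.sin β₁ := by
        rw [Real.sin_sub, Real.cos_two_pi, Real.sin_two_pi]; ring
      refine ⟨?_, ?_, ?_, ?_, ?_, ?_, ?_, ?_, Or.inl Real.sin_zero, ?_, ?_, Or.inl Real.sin_zero⟩ <;>
        simp [hc, hs, Real.sin_zero, Real.cos_zero] <;> nlinarith [hp, h3, h4]
    · -- case (c)
      subst hbb
      have hcr1 : Real.cos ρ₁ = -1 := by rcases h1 with h | h <;> simp [h]
      have hsr1 : Real.sin ρ₁ = 0 := by rcases h1 with h | h <;> simp [h]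
      have hcr2 : Real.cos ρ₂ = -1 := by rcases h2 with h | h <;> simp [h]
      have hsr2 : Real.sin ρ₂ = 0 := by rcases h2 with h | h <;> simp [h]
      have hp := Real.sin_sq_add_cos_sq β₁
      refine ⟨?_, ?_, ?_, ?_, ?_, ?_, ?_, ?_, Or.inl hsr1, ?_, ?_, Or.inl hsr1⟩ <;>
        simp [hcr1, hsr1, hcr2, hsr2] <;> nlinarith [hp, h3, h4]
end

section
/- Let α₁, α₂, α₃ ∈ (0, 2π) with sin α₁ ≠ 0, sin α₂ ≠ 0, sin α₃ ≠ 0, and let ρ₁, ρ₂, ρ₃ ∈ [−π, π] satisfy R_z(α₁)·R_x(ρ₁)·R_z(α₂)·R_x(ρ₂)·R_z(α₃)·R_x(ρ₃) = I₃. Then cos ρ₁ = (cos α₁·cos α₂ − cos α₃)/(sin α₁·sin α₂), cos ρ₂ = (cos α₂·cos α₃ − cos α₁)/(sin α₂·sin α₃), and cos ρ₃ = (cos α₃·cos α₁ − cos α₂)/(sin α₃·sin α₁). (These are the spherical-triangle formulas determining the folding angles of a degree-3 single-vertex creased paper up to a global sign.) -/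
open Matrix Real

lemma Rz_neg_mul (θ : ℝ) : Rz (-θ) * Rz θ = 1 := by
  ext i j
  fin_cases i <;> fin_cases j <;>
    simp [Rz, Matrix.mul_apply, Fin.sum_univ_three, Matrix.one_apply, -mul_eq_zero, Matrix.vecHead, Matrix.vecTail, Function.comp] <;> nlinarith [sin_sq_add_cos_sq θ]

lemma Rx_neg_mul (θ : ℝ) : Rx (-θ) * Rx θ = 1 := by
  ext i j
  fin_cases i <;> fin_cases j <;>
    simp [Rx, Matrix.mul_apply, Fin.sum_univ_three, Matrix.one_apply, -mul_eq_zero, Matrix.vecHead, Matrix.vecTail, Function.comp] <;> nlinarith [sin_sq_add_cos_sq θ]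

lemma Rx_mul_neg (θ : ℝ) : Rx θ * Rx (-θ) = 1 := by
  have := Rx_neg_mul (-θ); rwa [neg_neg] at this

lemma key (a b c p q r : ℝ)
    (h : Rz a * Rx p * Rz b * Rx q * Rz c * Rx r = 1) :
    Real.cos a * Real.cos b - Real.sin a * Real.sin b * Real.cos p = Real.cos c := by
  have h1 : Rz a * Rx p * Rz b = Rx (-r) * Rz (-c) * Rx (-q) := by
    have e : (Rz a * Rx p * Rz b) * (Rx q * Rz c * Rx r) = 1 := by
      rw [← h]; simp only [mul_assoc]
    calc Rz a * Rx p * Rz b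
        = (Rz a * Rx p * Rz b) * ((Rx q * Rz c * Rx r) * (Rx (-r) * Rz (-c) * Rx (-q))) := by
          have : (Rx q * Rz c * Rx r) * (Rx (-r) * Rz (-c) * Rx (-q)) = 1 := by
            have hq := Rx_neg_mul q
            have hc := Rz_neg_mul c
            have hr := Rx_mul_neg r
            calc Rx q * Rz c * Rx r * (Rx (-r) * Rz (-c) * Rx (-q))
                = Rx q * (Rz c * ((Rx r * Rx (-r)) * Rz (-c))) * Rx (-q) := by simp only [mul_assoc]
              _ = 1 := by rw [hr, one_mul]
                          rw [show Rz c * (Rz (-c)) = 1 from by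
                            have := Rz_neg_mul (-c); rwa [neg_neg] at this]
                          rw [mul_one, Rx_mul_neg q]
          rw [this, mul_one]
      _ = ((Rz a * Rx p * Rz b) * (Rx q * Rz c * Rx r)) * (Rx (-r) * Rz (-c) * Rx (-q)) := by simp only [mul_assoc]
      _ = Rx (-r) * Rz (-c) * Rx (-q) := by rw [e, one_mul]
  have := congrFun (congrFun h1 0) 0
  simp [Rz, Rx, Matrix.mul_apply, Fin.sum_univ_three] at this
  linarith

/-- the spherical-triangle formulas for the folding angles of a degree-3
single-vertex creased paper. -/
theorem degree_three_single_vertex_spherical_triangle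
    (α₁ α₂ α₃ : ℝ)
    (hα₁ : α₁ ∈ Set.Ioo 0 (2 * π)) (hα₂ : α₂ ∈ Set.Ioo 0 (2 * π))
    (hα₃ : α₃ ∈ Set.Ioo 0 (2 * π))
    (hs₁ : Real.sin α₁ ≠ 0) (hs₂ : Real.sin α₂ ≠ 0) (hs₃ : Real.sin α₃ ≠ 0)
    (ρ₁ ρ₂ ρ₃ : ℝ)
    (hρ₁ : ρ₁ ∈ Set.Icc (-π) π) (hρ₂ : ρ₂ ∈ Set.Icc (-π) π) (hρ₃ : ρ₃ ∈ Set.Icc (-π) π)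
    (h : Rz α₁ * Rx ρ₁ * Rz α₂ * Rx ρ₂ * Rz α₃ * Rx ρ₃ = 1) :
    Real.cos ρ₁ = (Real.cos α₁ * Real.cos α₂ - Real.cos α₃) / (Real.sin α₁ * Real.sin α₂) ∧
    Real.cos ρ₂ = (Real.cos α₂ * Real.cos α₃ - Real.cos α₁) / (Real.sin α₂ * Real.sin α₃) ∧
    Real.cos ρ₃ = (Real.cos α₃ * Real.cos α₁ - Real.cos α₂) / (Real.sin α₃ * Real.sin α₁) := by
  have h2 : Rz α₂ * Rx ρ₂ * Rz α₃ * Rx ρ₃ * Rz α₁ * Rx ρ₁ = 1 := by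
    have := mul_eq_one_comm.mp (show (Rz α₁ * Rx ρ₁) * (Rz α₂ * Rx ρ₂ * Rz α₃ * Rx ρ₃) = 1 from by rw [← h]; simp only [mul_assoc])
    calc Rz α₂ * Rx ρ₂ * Rz α₃ * Rx ρ₃ * Rz α₁ * Rx ρ₁
        = (Rz α₂ * Rx ρ₂ * Rz α₃ * Rx ρ₃) * (Rz α₁ * Rx ρ₁) := by simp only [mul_assoc]
      _ = 1 := this
  have h3 : Rz α₃ * Rx ρ₃ * Rz α₁ * Rx ρ₁ * Rz α₂ * Rx ρ₂ = 1 := by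
    have := mul_eq_one_comm.mp (show (Rz α₁ * Rx ρ₁ * Rz α₂ * Rx ρ₂) * (Rz α₃ * Rx ρ₃) = 1 from by rw [← h]; simp only [mul_assoc])
    calc Rz α₃ * Rx ρ₃ * Rz α₁ * Rx ρ₁ * Rz α₂ * Rx ρ₂
        = (Rz α₃ * Rx ρ₃) * (Rz α₁ * Rx ρ₁ * Rz α₂ * Rx ρ₂) := by simp only [mul_assoc]
      _ = 1 := this
  have k1 := key _ _ _ _ _ _ h
  have k2 := key _ _ _ _ _ _ h2
  have k3 := key _ _ _ _ _ _ h3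
  refine ⟨?_, ?_, ?_⟩ <;> field_simp <;> linarith
end

section
/- Let α₁, α₂, α₃ ∈ (0, 2π) with α₁ + α₂ + α₃ = 2π and αᵢ ≠ π for i = 1, 2, 3, and let ρ₁, ρ₂, ρ₃ ∈ [−π, π] satisfy R_z(α₁)·R_x(ρ₁)·R_z(α₂)·R_x(ρ₂)·R_z(α₃)·R_x(ρ₃) = I₃. Then ρ₁ = ρ₂ = ρ₃ = 0. (A developable degree-3 single-vertex creased paper with no straight crease pair has only the trivial rigidly folded state: it is globally rigid.) -/
open Matrix Real

lemma Rz_mul (a b : ℝ) : Rz a * Rz b = Rz (a + b) := by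
  ext i j
  fin_cases i <;> fin_cases j <;>
    simp [Rz, Matrix.mul_apply, Fin.sum_univ_three, Real.cos_add, Real.sin_add,
      Matrix.vecHead, Matrix.vecTail] <;> ring

lemma Rx_mul (a b : ℝ) : Rx a * Rx b = Rx (a + b) := by
  ext i j
  fin_cases i <;> fin_cases j <;>
    simp [Rx, Matrix.mul_apply, Fin.sum_univ_three, Real.cos_add, Real.sin_add,
      Matrix.vecHead, Matrix.vecTail] <;> ring

lemma Rz_zero : Rz 0 = 1 := by
  ext i j; fin_cases i <;> fin_cases j <;> simp [Rz, Matrix.vecHead, Matrix.vecTail]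

lemma Rx_zero : Rx 0 = 1 := by
  ext i j; fin_cases i <;> fin_cases j <;> simp [Rx, Matrix.vecHead, Matrix.vecTail]

lemma sin_ne (a : ℝ) (ha : a ∈ Set.Ioo 0 (2*π)) (hn : a ≠ π) : Real.sin a ≠ 0 := by
  obtain ⟨h1, h2⟩ := ha
  rcases lt_or_gt_of_ne hn with hlt | hgt
  · exact ne_of_gt (Real.sin_pos_of_pos_of_lt_pi h1 hlt)
  · have : Real.sin (a - π) > 0 := Real.sin_pos_of_pos_of_lt_pi (by linarith) (by linarith)
    rw [Real.sin_sub_pi] at this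
    linarith

lemma rho_eq_zero (ρ : ℝ) (hρ : ρ ∈ Set.Icc (-π) π) (hc : Real.cos ρ = 1) : ρ = 0 := by
  have hπ := Real.pi_pos
  obtain ⟨h1, h2⟩ := hρ
  exact (Real.cos_eq_one_iff_of_lt_of_lt (by linarith) (by linarith)).1 hc

/-- a developable degree-3 single-vertex creased paper with no sector angle
equal to `π` has only the trivial rigidly folded state: it is globally rigid. -/
theorem developable_degree_three_globally_rigid
    (α₁ α₂ α₃ : ℝ)
    (hα₁ : α₁ ∈ Set.Ioo 0 (2 * π)) (hα₂ : α₂ ∈ Set.Ioo 0 (2 * π))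
    (hα₃ : α₃ ∈ Set.Ioo 0 (2 * π))
    (hdev : α₁ + α₂ + α₃ = 2 * π)
    (hn₁ : α₁ ≠ π) (hn₂ : α₂ ≠ π) (hn₃ : α₃ ≠ π)
    (ρ₁ ρ₂ ρ₃ : ℝ)
    (hρ₁ : ρ₁ ∈ Set.Icc (-π) π) (hρ₂ : ρ₂ ∈ Set.Icc (-π) π) (hρ₃ : ρ₃ ∈ Set.Icc (-π) π)
    (h : Rz α₁ * Rx ρ₁ * Rz α₂ * Rx ρ₂ * Rz α₃ * Rx ρ₃ = 1) :
    ρ₁ = 0 ∧ ρ₂ = 0 ∧ ρ₃ = 0 := by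
  have hπ := Real.pi_pos
  have s₁ := sin_ne α₁ hα₁ hn₁
  have s₂ := sin_ne α₂ hα₂ hn₂
  have s₃ := sin_ne α₃ hα₃ hn₃
  have cz1 : Rz (-α₁) * Rz α₁ = 1 := by rw [Rz_mul, neg_add_cancel, Rz_zero]
  have cx3 : Rx ρ₃ * Rx (-ρ₃) = 1 := by rw [Rx_mul, add_neg_cancel, Rx_zero]
  have cz3 : Rz α₃ * Rz (-α₃) = 1 := by rw [Rz_mul, add_neg_cancel, Rz_zero]
  have key : Rx ρ₁ * (Rz α₂ * Rx ρ₂) = Rz (-α₁) * (Rx (-ρ₃) * Rz (-α₃)) := by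
    have h2 := congrArg (fun M => Rz (-α₁) * M * (Rx (-ρ₃) * Rz (-α₃))) h
    simp only [one_mul, mul_one, mul_assoc] at h2
    rw [show Rx ρ₃ * (Rx (-ρ₃) * Rz (-α₃)) = Rz (-α₃) from by
        rw [← mul_assoc, cx3, one_mul]] at h2
    rw [cz3, mul_one, ← mul_assoc (Rz (-α₁)) (Rz α₁), cz1, one_mul] at h2
    exact h2
  -- entry (0,0) gives cos ρ₃ = 1, hence ρ₃ = 0
  have e00 := Matrix.ext_iff.2 key 0 0
  simp [Rz, Rx, Matrix.mul_apply, Fin.sum_univ_three, Matrix.vecHead, Matrix.vecTail] at e00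
  have hc : Real.cos α₂ = Real.cos α₁ * Real.cos α₃ - Real.sin α₁ * Real.sin α₃ := by
    rw [show α₂ = 2*π - (α₁+α₃) by linarith, Real.cos_two_pi_sub, Real.cos_add]
  have hprod : Real.sin α₁ * Real.sin α₃ * (1 - Real.cos ρ₃) = 0 := by
    linear_combination hc - e00
  have hcρ₃ : Real.cos ρ₃ = 1 := by
    rcases mul_eq_zero.1 hprod with h' | h'
    · exact absurd h' (mul_ne_zero s₁ s₃)
    · linarith
  have hρ₃0 : ρ₃ = 0 := rho_eq_zero ρ₃ hρ₃ hcρ₃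
  -- now rewrite key
  have key2 : Rx ρ₁ * (Rz α₂ * Rx ρ₂) = Rz α₂ := by
    rw [key, hρ₃0, neg_zero, Rx_zero, one_mul, Rz_mul,
      show -α₁ + -α₃ = α₂ - 2*π by linarith]
    ext i j
    fin_cases i <;> fin_cases j <;>
      simp [Rz, Real.cos_sub_two_pi, Real.sin_sub_two_pi, Matrix.vecHead, Matrix.vecTail]
  have e01 := Matrix.ext_iff.2 key2 0 1
  have e10 := Matrix.ext_iff.2 key2 1 0
  simp [Rz, Rx, Matrix.mul_apply, Fin.sum_univ_three, Matrix.vecHead, Matrix.vecTail]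
    at e01 e10
  have hcρ₂ : Real.cos ρ₂ = 1 := by
    have : Real.sin α₂ * (1 - Real.cos ρ₂) = 0 := by linear_combination -e01
    rcases mul_eq_zero.1 this with h' | h'
    · exact absurd h' s₂
    · linarith
  have hcρ₁ : Real.cos ρ₁ = 1 := by
    have : Real.sin α₂ * (1 - Real.cos ρ₁) = 0 := by linear_combination -e10
    rcases mul_eq_zero.1 this with h' | h'
    · exact absurd h' s₂
    · linarith
  exact ⟨rho_eq_zero ρ₁ hρ₁ hcρ₁, rho_eq_zero ρ₂ hρ₂ hcρ₂, hρ₃0⟩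
end

section
/- Let n ≥ 2, let 1 ≤ m < n, and let sector angles α₁, …, α_n ∈ ℝ satisfy α₁ + ⋯ + α_m = π and α_{m+1} + ⋯ + α_n = π (i.e., creases c_m and c_n are collinear). Then for every t ∈ ℝ, the folding angles defined by ρ_m = ρ_n = t and ρ_j = 0 for all j ∉ {m, n} satisfy the single-vertex consistency constraint T_n(α, ρ) = I₃. Hence the solution set of the constraint contains the one-parameter family of foldings along the straight line through the vertex. -/
open Matrix Real

/-- The single-vertex consistency matrix `T_n(α, ρ) = ∏_{j=1}^n R_z(α_j)·R_x(ρ_j)`, with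
angles indexed `1, …, n` and the product taken in order of increasing index. -/
noncomputable def Tn (n : ℕ) (α ρ : ℕ → ℝ) : Matrix (Fin 3) (Fin 3) ℝ :=
  ((List.range n).map (fun j => Rz (α (j + 1)) * Rx (ρ (j + 1)))).prod

/-!
Folding only along the collinear creases `c_m` and `c_n` splits `T_n` into two blocks. In each
block the flat creases contribute pure z-rotations, which add up to the sector angle sum `π`, so
each block equals `R_z(π) R_x(t)`. Conjugation by `R_z(π) = diag(-1, -1, 1)` inverts `R_x(t)`,
hence `(R_z(π) R_x(t))² = R_x(-t) R_x(t) = I₃`.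
-/

lemma Rz_add (a b : ℝ) : Rz (a + b) = Rz a * Rz b := by
  ext i j
  fin_cases i <;> fin_cases j <;>
    simp [Rz, Matrix.mul_apply, Fin.sum_univ_succ, cos_add, sin_add] <;> ring

lemma Rx_add (a b : ℝ) : Rx (a + b) = Rx a * Rx b := by
  ext i j
  fin_cases i <;> fin_cases j <;>
    simp [Rx, Matrix.mul_apply, Fin.sum_univ_succ, cos_add, sin_add] <;> ring

lemma Rz_pi_mul_Rx_mul_Rz_pi (t : ℝ) : Rz π * Rx t * Rz π = Rx (-t) := by
  ext i j
  fin_cases i <;> fin_cases j <;> simp [Rz, Rx, Matrix.mul_apply, Fin.sum_univ_succ]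

lemma Rz_pi_mul_Rx_mul_self (t : ℝ) : Rz π * Rx t * (Rz π * Rx t) = 1 := by
  rw [← Matrix.mul_assoc, Rz_pi_mul_Rx_mul_Rz_pi, ← Rx_add, neg_add_cancel, Rx_zero]

lemma Tn_succ (k : ℕ) (α ρ : ℕ → ℝ) :
    Tn (k + 1) α ρ = Tn k α ρ * (Rz (α (k + 1)) * Rx (ρ (k + 1))) := by
  simp [Tn, List.range_succ]

lemma Tn_add (k l : ℕ) (α ρ : ℕ → ℝ) :
    Tn (k + l) α ρ = Tn k α ρ * Tn l (fun j => α (k + j)) (fun j => ρ (k + j)) := by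
  simp [Tn, List.range_add, Function.comp_def, add_assoc]

lemma Tn_eq_Rz_sum {k : ℕ} {α ρ : ℕ → ℝ} (hρ : ∀ j ∈ Finset.Icc 1 k, ρ j = 0) :
    Tn k α ρ = Rz (∑ j ∈ Finset.Icc 1 k, α j) := by
  induction k with
  | zero => simp [Tn, Rz_zero]
  | succ k ih =>
    have hk : ρ (k + 1) = 0 := hρ (k + 1) (by simp)
    rw [Tn_succ, ih (fun j hj => hρ j (Finset.Icc_subset_Icc_right k.le_succ hj)), hk, Rx_zero,
      Matrix.mul_one, Finset.sum_Icc_succ_top (by omega), Rz_add]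

lemma Tn_succ_eq_Rz_sum_mul_Rx {k : ℕ} {α ρ : ℕ → ℝ} (hρ : ∀ j ∈ Finset.Icc 1 k, ρ j = 0) :
    Tn (k + 1) α ρ = Rz (∑ j ∈ Finset.Icc 1 (k + 1), α j) * Rx (ρ (k + 1)) := by
  rw [Tn_succ, Tn_eq_Rz_sum hρ, Finset.sum_Icc_succ_top (by omega), Rz_add, Matrix.mul_assoc]

theorem collinear_pair_one_parameter_family_general (n m : ℕ) (hm : 1 ≤ m)
    (hmn : m < n) (α : ℕ → ℝ)
    (h₁ : ∑ j ∈ Finset.Icc 1 m, α j = π)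
    (h₂ : ∑ j ∈ Finset.Icc (m + 1) n, α j = π)
    (t : ℝ) :
    Tn n α (fun j => if j = m ∨ j = n then t else 0) = 1 := by
  obtain ⟨k, rfl⟩ : ∃ k, m = k + 1 := ⟨m - 1, by omega⟩
  obtain ⟨l, rfl⟩ : ∃ l, n = k + 1 + (l + 1) := ⟨n - (k + 2), by omega⟩
  have h₂' : ∑ j ∈ Finset.Icc 1 (l + 1), α (k + 1 + j) = π := by
    rw [← h₂, ← Finset.map_add_left_Icc, Finset.sum_map]
    simp [add_comm]
  rw [Tn_add, Tn_succ_eq_Rz_sum_mul_Rx, Tn_succ_eq_Rz_sum_mul_Rx, h₁, h₂']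
  · simpa using Rz_pi_mul_Rx_mul_self t
  all_goals
    intro j hj
    simp only [Finset.mem_Icc] at hj
    simp only [ite_eq_right_iff]
    omega

/-- if `α₁ + ⋯ + α_m = π` and `α_{m+1} + ⋯ + α_n = π` (creases `c_m` and `c_n`
are collinear), then for every `t ∈ ℝ` the folding angles `ρ_m = ρ_n = t`, all other
`ρ_j = 0`, satisfy the single-vertex consistency constraint `T_n(α, ρ) = I₃`. -/
theorem collinear_pair_one_parameter_family (n m : ℕ) (hn : 2 ≤ n) (hm : 1 ≤ m)
    (hmn : m < n) (α : ℕ → ℝ)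
    (h₁ : ∑ j ∈ Finset.Icc 1 m, α j = π)
    (h₂ : ∑ j ∈ Finset.Icc (m + 1) n, α j = π)
    (t : ℝ) :
    Tn n α (fun j => if j = m ∨ j = n then t else 0) = 1 :=
  collinear_pair_one_parameter_family_general n m hm hmn α h₁ h₂ t
end

section
/- Fix K ≥ 1 and β₁, …, β_K ∈ ℝ, let ρ : ℝ → ℝ^K be differentiable, and for 0 ≤ k ≤ K define T_k(s) = ∏_{l=1}^k R_z(β_l)·R_x(ρ_l(s)) (so T₀(s) = I₃). Then for every k with 1 ≤ k ≤ K and every s ∈ ℝ: T_k′(s)·T_k(s)ᵀ − T_{k−1}′(s)·T_{k−1}(s)ᵀ = ρ_k′(s) · skew( T_{k−1}(s)·R_z(β_k)·e₁ ), where e₁ = (1, 0, 0)ᵀ and skew(v) denotes the 3×3 skew-symmetric matrix with skew(v)·w = v × w for all w ∈ ℝ³. (In origami terms: the difference of the angular velocities of consecutive panels, ω_k − ω_{k−1}, equals the folding-angle rate ρ̇_k times the direction vector of the common crease c_k.) -/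
open Matrix Real

/-- The skew-symmetric matrix of a vector `v`, satisfying `skew v *ᵥ w = v ×₃ w`. -/
noncomputable def skew (v : Fin 3 → ℝ) : Matrix (Fin 3) (Fin 3) ℝ :=
  !![0, -v 2, v 1; v 2, 0, -v 0; -v 1, v 0, 0]

/-- The orientation of panel `P_k`:
`T_k(s) = ∏_{l=1}^k R_z(β_l)·R_x(ρ_l(s))` (with `T₀(s) = I₃`), angles indexed from 1. -/
noncomputable def Tpanel (β : ℕ → ℝ) (ρ : ℝ → ℕ → ℝ) (k : ℕ) (s : ℝ) :
    Matrix (Fin 3) (Fin 3) ℝ :=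
  ((List.range k).map (fun l => Rz (β (l + 1)) * Rx (ρ s (l + 1)))).prod

/-- The entrywise `s`-derivative of `T_k(s)`. -/
noncomputable def Tpanel' (β : ℕ → ℝ) (ρ : ℝ → ℕ → ℝ) (k : ℕ) (s : ℝ) :
    Matrix (Fin 3) (Fin 3) ℝ :=
  Matrix.of fun i j => deriv (fun u => Tpanel β ρ k u i j) s

/-!
Write `T_k = T_{k-1} · B` with `B(s) = R_z(β_k) R_x(ρ_k(s))`. Since `B Bᵀ = 1`, the product rule
gives `T_k′ T_kᵀ = T_{k-1}′ T_{k-1}ᵀ + T_{k-1} (B′ Bᵀ) T_{k-1}ᵀ`, and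
`B′ Bᵀ = ρ_k′ · R_z skew(e₁) R_zᵀ` because `R_x(θ)′ = θ′ · skew(e₁) R_x(θ)`. Finally a rotation
`Q` conjugates `skew v` into `skew (Q v)`; apply this to `Q = T_{k-1} R_z(β_k)`.
-/

lemma mem_specialOrthogonalGroup_real_iff {n : Type*} [Fintype n] [DecidableEq n]
    {Q : Matrix n n ℝ} : Q ∈ specialOrthogonalGroup n ℝ ↔ Q * Qᵀ = 1 ∧ Q.det = 1 := by
  rw [mem_specialOrthogonalGroup_iff, mem_orthogonalGroup_iff]

lemma Rz_mem_specialOrthogonalGroup (θ : ℝ) : Rz θ ∈ specialOrthogonalGroup (Fin 3) ℝ := by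
  rw [mem_specialOrthogonalGroup_real_iff]
  constructor
  · ext i j
    fin_cases i <;> fin_cases j <;>
      simp [Rz, mul_apply, Fin.sum_univ_three, one_apply] <;>
      nlinarith [Real.sin_sq_add_cos_sq θ]
  · simp [Rz, det_fin_three]
    nlinarith [Real.sin_sq_add_cos_sq θ]

lemma Rx_mem_specialOrthogonalGroup (θ : ℝ) : Rx θ ∈ specialOrthogonalGroup (Fin 3) ℝ := by
  rw [mem_specialOrthogonalGroup_real_iff]
  constructor
  · ext i j
    fin_cases i <;> fin_cases j <;>
      simp [Rx, mul_apply, Fin.sum_univ_three, one_apply] <;>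
      nlinarith [Real.sin_sq_add_cos_sq θ]
  · simp [Rx, det_fin_three]
    nlinarith [Real.sin_sq_add_cos_sq θ]

lemma Tpanel_mem_specialOrthogonalGroup (β : ℕ → ℝ) (ρ : ℝ → ℕ → ℝ) (k : ℕ) (s : ℝ) :
    Tpanel β ρ k s ∈ specialOrthogonalGroup (Fin 3) ℝ := by
  refine list_prod_mem fun B hB => ?_
  obtain ⟨l, -, rfl⟩ := List.mem_map.mp hB
  exact mul_mem (Rz_mem_specialOrthogonalGroup _) (Rx_mem_specialOrthogonalGroup _)

lemma transpose_mul_skew_mulVec_mul (Q : Matrix (Fin 3) (Fin 3) ℝ) (v : Fin 3 → ℝ) :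
    Qᵀ * skew (Q *ᵥ v) * Q = Q.det • skew v := by
  ext i j
  fin_cases i <;> fin_cases j <;>
    simp [skew, mul_apply, mulVec, dotProduct, Fin.sum_univ_three, det_fin_three] <;> ring

lemma mul_skew_mul_transpose {Q : Matrix (Fin 3) (Fin 3) ℝ}
    (hQ : Q ∈ specialOrthogonalGroup (Fin 3) ℝ) (v : Fin 3 → ℝ) :
    Q * skew v * Qᵀ = skew (Q *ᵥ v) := by
  obtain ⟨hQQ, hdet⟩ := mem_specialOrthogonalGroup_real_iff.mp hQ
  calc Q * skew v * Qᵀ = Q * (Qᵀ * skew (Q *ᵥ v) * Q) * Qᵀ := by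
        rw [transpose_mul_skew_mulVec_mul, hdet, one_smul]
    _ = (Q * Qᵀ) * skew (Q *ᵥ v) * (Q * Qᵀ) := by noncomm_ring
    _ = skew (Q *ᵥ v) := by rw [hQQ, one_mul, mul_one]

lemma Tpanel_succ (β : ℕ → ℝ) (ρ : ℝ → ℕ → ℝ) (k : ℕ) (s : ℝ) :
    Tpanel β ρ (k + 1) s = Tpanel β ρ k s * (Rz (β (k + 1)) * Rx (ρ s (k + 1))) := by
  simp [Tpanel, List.range_succ]

section EntrywiseDeriv

variable {m n p : Type*}

def HasMatrixDerivAt (f : ℝ → Matrix m n ℝ) (f' : Matrix m n ℝ) (s : ℝ) : Prop :=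
  ∀ i j, HasDerivAt (fun u => f u i j) (f' i j) s

lemma hasMatrixDerivAt_const (C : Matrix m n ℝ) (s : ℝ) :
    HasMatrixDerivAt (fun _ => C) 0 s :=
  fun i j => hasDerivAt_const s (C i j)

lemma HasMatrixDerivAt.mul [Fintype n] {f : ℝ → Matrix m n ℝ} {g : ℝ → Matrix n p ℝ}
    {f' : Matrix m n ℝ} {g' : Matrix n p ℝ} {s : ℝ}
    (hf : HasMatrixDerivAt f f' s) (hg : HasMatrixDerivAt g g' s) :
    HasMatrixDerivAt (fun u => f u * g u) (f' * g s + f s * g') s := by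
  intro i j
  simp only [mul_apply, Matrix.add_apply, ← Finset.sum_add_distrib]
  exact HasDerivAt.fun_sum fun l _ => (hf i l).mul (hg l j)

lemma HasMatrixDerivAt.entrywise_deriv_eq {f : ℝ → Matrix m n ℝ} {f' : Matrix m n ℝ} {s : ℝ}
    (hf : HasMatrixDerivAt f f' s) : Matrix.of (fun i j => deriv (fun u => f u i j) s) = f' := by
  ext i j
  exact (hf i j).deriv

end EntrywiseDeriv

lemma hasMatrixDerivAt_Rx {θ : ℝ → ℝ} {θ' s : ℝ} (hθ : HasDerivAt θ θ' s) :
    HasMatrixDerivAt (fun u => Rx (θ u)) (θ' • (skew ![1, 0, 0] * Rx (θ s))) s := by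
  intro i j
  fin_cases i <;> fin_cases j <;>
    simp [Rx, skew, vecHead, vecTail]
  all_goals first
    | exact hasDerivAt_const s _
    | simpa [mul_comm] using hθ.cos
    | simpa [mul_comm] using hθ.sin
    | simpa [mul_comm] using hθ.sin.fun_neg

lemma hasMatrixDerivAt_Tpanel_succ (β : ℕ → ℝ) (ρ : ℝ → ℕ → ℝ) (k : ℕ)
    {T' : Matrix (Fin 3) (Fin 3) ℝ} {c s : ℝ} (hT : HasMatrixDerivAt (Tpanel β ρ k) T' s)
    (hρ : HasDerivAt (fun u => ρ u (k + 1)) c s) :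
    HasMatrixDerivAt (Tpanel β ρ (k + 1)) (T' * (Rz (β (k + 1)) * Rx (ρ s (k + 1))) +
      Tpanel β ρ k s * (Rz (β (k + 1)) * (c • (skew ![1, 0, 0] * Rx (ρ s (k + 1)))))) s := by
  have h := hT.mul ((hasMatrixDerivAt_const (Rz (β (k + 1))) s).mul (hasMatrixDerivAt_Rx hρ))
  simpa only [zero_mul, zero_add, ← Tpanel_succ] using h

lemma hasMatrixDerivAt_Tpanel (β : ℕ → ℝ) (ρ : ℝ → ℕ → ℝ)
    (hρ : ∀ l, Differentiable ℝ (fun s => ρ s l)) (k : ℕ) (s : ℝ) :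
    HasMatrixDerivAt (Tpanel β ρ k) (Tpanel' β ρ k s) s := by
  induction k with
  | zero =>
    have h : HasMatrixDerivAt (Tpanel β ρ 0) 0 s := hasMatrixDerivAt_const 1 s
    rwa [Tpanel', h.entrywise_deriv_eq]
  | succ k ih =>
    have h := hasMatrixDerivAt_Tpanel_succ β ρ k ih ((hρ (k + 1)) s).hasDerivAt
    rwa [Tpanel', h.entrywise_deriv_eq]

lemma Tpanel'_succ (β : ℕ → ℝ) (ρ : ℝ → ℕ → ℝ) (hρ : ∀ l, Differentiable ℝ (fun s => ρ s l))
    (k : ℕ) (s : ℝ) :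
    Tpanel' β ρ (k + 1) s = Tpanel' β ρ k s * (Rz (β (k + 1)) * Rx (ρ s (k + 1))) +
      Tpanel β ρ k s * (Rz (β (k + 1)) *
        (deriv (fun u => ρ u (k + 1)) s • (skew ![1, 0, 0] * Rx (ρ s (k + 1))))) :=
  (hasMatrixDerivAt_Tpanel_succ β ρ k (hasMatrixDerivAt_Tpanel β ρ hρ k s)
    ((hρ (k + 1)) s).hasDerivAt).entrywise_deriv_eq

/-- The angular velocity of `A B` is that of `A` plus the one of `B`, transported by `A`. -/
lemma product_rule_mul_transpose {n R : Type*} [Fintype n] [DecidableEq n] [CommRing R]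
    {A A' B B' : Matrix n n R} (hB : B * Bᵀ = 1) :
    (A' * B + A * B') * (A * B)ᵀ = A' * Aᵀ + A * (B' * Bᵀ) * Aᵀ := by
  rw [transpose_mul, add_mul]
  congr 1
  calc A' * B * (Bᵀ * Aᵀ) = A' * (B * Bᵀ) * Aᵀ := by noncomm_ring
    _ = A' * Aᵀ := by rw [hB, mul_one]
  noncomm_ring

theorem angular_velocity_difference_general (β : ℕ → ℝ) (ρ : ℝ → ℕ → ℝ)
    (hρ : ∀ l, Differentiable ℝ (fun s => ρ s l))
    (k : ℕ) (hk1 : 1 ≤ k) (s : ℝ) :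
    Tpanel' β ρ k s * (Tpanel β ρ k s)ᵀ - Tpanel' β ρ (k - 1) s * (Tpanel β ρ (k - 1) s)ᵀ =
      deriv (fun u => ρ u k) s •
        skew ((Tpanel β ρ (k - 1) s * Rz (β k)).mulVec ![1, 0, 0]) := by
  obtain ⟨k, rfl⟩ := Nat.exists_eq_add_of_le' hk1
  set A := Tpanel β ρ k s
  set Z := Rz (β (k + 1))
  set X := Rx (ρ s (k + 1))
  set c := deriv (fun u => ρ u (k + 1)) s
  have hAZ : A * Z ∈ specialOrthogonalGroup (Fin 3) ℝ :=
    mul_mem (Tpanel_mem_specialOrthogonalGroup β ρ k s) (Rz_mem_specialOrthogonalGroup _)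
  have hX : X * Xᵀ = 1 :=
    (mem_specialOrthogonalGroup_real_iff.mp (Rx_mem_specialOrthogonalGroup _)).1
  have hZX : (Z * X) * (Z * X)ᵀ = 1 :=
    (mem_specialOrthogonalGroup_real_iff.mp
      (mul_mem (Rz_mem_specialOrthogonalGroup _) (Rx_mem_specialOrthogonalGroup _))).1
  have hB : Z * (c • (skew ![1, 0, 0] * X)) * (Z * X)ᵀ = c • (Z * skew ![1, 0, 0] * Zᵀ) := by
    rw [transpose_mul, mul_smul_comm, smul_mul_assoc]
    congr 1
    calc Z * (skew ![1, 0, 0] * X) * (Xᵀ * Zᵀ) = Z * skew ![1, 0, 0] * (X * Xᵀ) * Zᵀ := by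
          noncomm_ring
      _ = Z * skew ![1, 0, 0] * Zᵀ := by rw [hX, mul_one]
  rw [Nat.add_sub_cancel, Tpanel'_succ β ρ hρ, Tpanel_succ, product_rule_mul_transpose hZX, hB,
    add_sub_cancel_left, ← mul_skew_mul_transpose hAZ, transpose_mul, mul_smul_comm,
    smul_mul_assoc]
  noncomm_ring

/-- for a differentiable path of folding angles,
`T_k′·T_kᵀ − T_{k−1}′·T_{k−1}ᵀ = ρ_k′ · skew(T_{k−1}·R_z(β_k)·e₁)`, i.e. the difference of
angular velocities of consecutive panels is the folding-angle rate times the direction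
vector of the common crease. -/
theorem angular_velocity_difference (K : ℕ) (hK : 1 ≤ K) (β : ℕ → ℝ) (ρ : ℝ → ℕ → ℝ)
    (hρ : ∀ l, Differentiable ℝ (fun s => ρ s l))
    (k : ℕ) (hk1 : 1 ≤ k) (hkK : k ≤ K) (s : ℝ) :
    Tpanel' β ρ k s * (Tpanel β ρ k s)ᵀ - Tpanel' β ρ (k - 1) s * (Tpanel β ρ (k - 1) s)ᵀ =
      deriv (fun u => ρ u k) s •
        skew ((Tpanel β ρ (k - 1) s * Rz (β k)).mulVec ![1, 0, 0]) :=
  angular_velocity_difference_general β ρ hρ k hk1 s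
end
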